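/- Let σ(x) := x · tanh(log(1 + e^x)) be the Mish activation and for h ∈ ℝ define B(x,h) := σ(x + h) − 2σ(x) + σ(x − h). Then: (i) there exists M > 0 with |B(x,h)| ≤ M h² for all x, h ∈ ℝ; (ii) ∫_ℝ |B(x,h)| dx ≤ ‖σ''‖_{L¹(ℝ)} h² for all h ∈ ℝ; and (iii) the n-fold composition 𝔅(x₁,…,x_n) := B(x_n, B(x_{n−1}, …, B(x₁,1)…)) belongs to L¹(ℝⁿ). -/

import Mathlib

/-
Writing σ(x) = x − g(x) with g(x) = 2x / (e^{2x} + 2eˣ + 2), the second derivative σ'' = −g'' is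
continuous with |σ''(x)| ≤ 48 e^{−|x|/2}. Taylor's formula with integral remainder,
B(x, h) = ∫₀ʰ ∫₀ʰ σ''(x + s − t) ds dt, then gives (i) at once, and (ii) after Tonelli and
translation invariance of Lebesgue measure. The same formula gives
|B(x, h)| ≤ K_R e^{−|x|/2} |h| for |h| ≤ R; since each inner composition is bounded, induction
bounds 𝔅 by C ∏ᵢ e^{−|xᵢ|/2}, which is integrable on ℝⁿ.
-/

open MeasureTheory Real Set
open scoped Interval

noncomputable def secondDiff (f : ℝ → ℝ) (x h : ℝ) : ℝ := f (x + h) - 2 * f x + f (x - h)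

section SecondDiff

variable {f f' f'' : ℝ → ℝ}

theorem secondDiff_eq_integral (hf : ∀ x, HasDerivAt f (f' x) x)
    (hf' : ∀ x, HasDerivAt f' (f'' x) x) (hf'' : Continuous f'') (x h : ℝ) :
    secondDiff f x h = ∫ t in 0..h, ∫ s in 0..h, f'' (x + s - t) := by
  have inner : ∀ t, ∫ s in 0..h, f'' (x + s - t) = f' (x + h - t) - f' (x - t) := by
    intro t
    have hG : ∀ s, HasDerivAt (fun s => f' (x + s - t)) (f'' (x + s - t)) s := fun s =>
      ((hf' _).comp s (((hasDerivAt_id s).const_add x).sub_const t)).congr_deriv (mul_one _)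
    rw [intervalIntegral.integral_eq_sub_of_hasDerivAt (fun s _ => hG s)
      ((hf''.comp (by fun_prop)).intervalIntegrable _ _), add_zero]
  have hF : ∀ t, HasDerivAt (fun t => f (x - t) - f (x + h - t))
      (f' (x + h - t) - f' (x - t)) t := fun t =>
    (((hf _).comp_const_sub x t).sub ((hf _).comp_const_sub (x + h) t)).congr_deriv (by ring)
  have hcont' : Continuous f' := continuous_iff_continuousAt.2 fun y => (hf' y).continuousAt
  simp_rw [inner]
  rw [intervalIntegral.integral_eq_sub_of_hasDerivAt (fun t _ => hF t)
    ((by fun_prop : Continuous fun t => f' (x + h - t) - f' (x - t)).intervalIntegrable _ _)]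
  simp only [secondDiff, sub_zero, add_sub_cancel_right]
  ring

theorem abs_secondDiff_le (hf : ∀ x, HasDerivAt f (f' x) x)
    (hf' : ∀ x, HasDerivAt f' (f'' x) x) (hf'' : Continuous f'') {x h C : ℝ}
    (hC : ∀ y, |y - x| ≤ |h| → |f'' y| ≤ C) : |secondDiff f x h| ≤ C * h ^ 2 := by
  have hst : ∀ t ∈ Ι (0 : ℝ) h, ∀ s ∈ Ι (0 : ℝ) h, |f'' (x + s - t)| ≤ C := fun t ht s hs =>
    hC _ <| by
      rw [add_sub_assoc, add_sub_cancel_left, ← sub_zero h]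
      exact abs_sub_le_of_uIcc_subset_uIcc
        (uIcc_subset_uIcc (uIoc_subset_uIcc ht) (uIoc_subset_uIcc hs))
  rw [secondDiff_eq_integral hf hf' hf'', ← Real.norm_eq_abs]
  calc ‖∫ t in 0..h, ∫ s in 0..h, f'' (x + s - t)‖ ≤ C * |h - 0| * |h - 0| :=
        intervalIntegral.norm_integral_le_of_norm_le_const fun t ht =>
          intervalIntegral.norm_integral_le_of_norm_le_const (hst t ht)
    _ = C * h ^ 2 := by rw [sub_zero, mul_assoc, abs_mul_abs_self, sq]

theorem enorm_intervalIntegral_le {E : Type*} [NormedAddCommGroup E] [NormedSpace ℝ E]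
    (F : ℝ → E) (a b : ℝ) :
    ‖∫ t in a..b, F t‖ₑ ≤ ∫⁻ t in Ι a b, ‖F t‖ₑ := by
  rw [← ofReal_norm, intervalIntegral.norm_integral_eq_norm_integral_uIoc, ofReal_norm]
  exact enorm_integral_le_lintegral_enorm _

theorem lintegral_enorm_secondDiff_le (hf : ∀ x, HasDerivAt f (f' x) x)
    (hf' : ∀ x, HasDerivAt f' (f'' x) x) (hf'' : Continuous f'') (h : ℝ) :
    ∫⁻ x, ‖secondDiff f x h‖ₑ ≤ (∫⁻ y, ‖f'' y‖ₑ) * ENNReal.ofReal (h ^ 2) := by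
  set I := Ι (0 : ℝ) h
  have hpt : ∀ x, ‖secondDiff f x h‖ₑ ≤ ∫⁻ t in I, ∫⁻ s in I, ‖f'' (x + s - t)‖ₑ := fun x => by
    rw [secondDiff_eq_integral hf hf' hf'']
    exact (enorm_intervalIntegral_le _ _ _).trans
      (lintegral_mono fun t => enorm_intervalIntegral_le _ _ _)
  have hm : Measurable f'' := hf''.measurable
  have hvol : volume I = ENNReal.ofReal |h| := by rw [Real.volume_uIoc, sub_zero]
  calc ∫⁻ x, ‖secondDiff f x h‖ₑ ≤ ∫⁻ x, ∫⁻ t in I, ∫⁻ s in I, ‖f'' (x + s - t)‖ₑ :=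
        lintegral_mono hpt
    _ = ∫⁻ t in I, ∫⁻ x, ∫⁻ s in I, ‖f'' (x + s - t)‖ₑ :=
        lintegral_lintegral_swap <| Measurable.aemeasurable <|
          Measurable.lintegral_prod_right'
            (f := fun q : (ℝ × ℝ) × ℝ => ‖f'' (q.1.1 + q.2 - q.1.2)‖ₑ) (by fun_prop)
    _ = ∫⁻ t in I, ∫⁻ s in I, ∫⁻ x, ‖f'' (x + s - t)‖ₑ :=
        lintegral_congr fun t => lintegral_lintegral_swap (by fun_prop)
    _ = ∫⁻ t in I, ∫⁻ s in I, ∫⁻ y, ‖f'' y‖ₑ := by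
        refine lintegral_congr fun t => lintegral_congr fun s => ?_
        simp_rw [add_sub_assoc]
        exact lintegral_add_right_eq_self (fun y => ‖f'' y‖ₑ) (s - t)
    _ = (∫⁻ y, ‖f'' y‖ₑ) * ENNReal.ofReal (h ^ 2) := by
        rw [setLIntegral_const, setLIntegral_const, hvol, mul_assoc, ← ENNReal.ofReal_mul
          (abs_nonneg h), abs_mul_abs_self, sq]

theorem integral_abs_secondDiff_le (hf : ∀ x, HasDerivAt f (f' x) x)
    (hf' : ∀ x, HasDerivAt f' (f'' x) x) (hf'' : Continuous f'') (hint : Integrable f'')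
    (h : ℝ) : ∫ x, |secondDiff f x h| ≤ (∫ x, |f'' x|) * h ^ 2 := by
  have hcont : Continuous fun x => secondDiff f x h := by
    have := continuous_iff_continuousAt.2 fun y => (hf y).continuousAt
    unfold secondDiff; fun_prop
  simp_rw [← Real.norm_eq_abs]
  rw [integral_norm_eq_lintegral_enorm hcont.aestronglyMeasurable,
    integral_norm_eq_lintegral_enorm hf''.aestronglyMeasurable,
    ← ENNReal.toReal_ofReal (sq_nonneg h), ← ENNReal.toReal_mul]
  exact ENNReal.toReal_mono (ENNReal.mul_ne_top hint.2.ne ENNReal.ofReal_ne_top)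
    (lintegral_enorm_secondDiff_le hf hf' hf'' h)

end SecondDiff

/-- `iterComp B m` is the `(m + 1)`-fold composition `𝔅` on `ℝ^(m+1)`. -/
def iterComp (B : ℝ → ℝ → ℝ) : (m : ℕ) → (Fin (m + 1) → ℝ) → ℝ
  | 0, x => B (x 0) 1
  | m + 1, x => B (x (Fin.last (m + 1))) (iterComp B m (Fin.init x))

section IterComp

variable {B : ℝ → ℝ → ℝ}

theorem eq_iterComp {F : (m : ℕ) → (Fin m → ℝ) → ℝ} (h1 : ∀ x : Fin 1 → ℝ, F 1 x = B (x 0) 1)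
    (hstep : ∀ (m : ℕ) (x : Fin (m + 2) → ℝ),
      F (m + 2) x = B (x (Fin.last (m + 1))) (F (m + 1) (Fin.init x))) (m : ℕ) :
    F (m + 1) = iterComp B m := by
  induction m with
  | zero => exact funext h1
  | succ m ih => funext x; rw [hstep, ih]; rfl

theorem continuous_iterComp (hB : Continuous (Function.uncurry B)) :
    ∀ m, Continuous (iterComp B m)
  | 0 => show Continuous fun x : Fin 1 → ℝ => Function.uncurry B (x 0, 1) from
      hB.comp ((continuous_apply 0).prodMk continuous_const)
  | m + 1 => show Continuous fun x : Fin (m + 2) → ℝ =>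
      Function.uncurry B (x (Fin.last _), iterComp B m (Fin.init x)) from
      hB.comp ((continuous_apply _).prodMk
        ((continuous_iterComp hB m).comp (continuous_pi fun i => continuous_apply i.castSucc)))

theorem exists_abs_iterComp_le_prod {w : ℝ → ℝ} (hw0 : ∀ x, 0 ≤ w x) (hw1 : ∀ x, w x ≤ 1)
    (hBw : ∀ R, ∃ K, 0 ≤ K ∧ ∀ x h, |h| ≤ R → |B x h| ≤ K * w x * |h|) :
    ∀ m, ∃ C, 0 ≤ C ∧ ∀ x, |iterComp B m x| ≤ C * ∏ i, w (x i)
  | 0 => by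
    obtain ⟨K, hK, hBK⟩ := hBw 1
    refine ⟨K, hK, fun x => ?_⟩
    simpa [iterComp] using hBK (x 0) 1 (by norm_num)
  | m + 1 => by
    obtain ⟨C, hC, hbound⟩ := exists_abs_iterComp_le_prod hw0 hw1 hBw m
    obtain ⟨K, hK, hBK⟩ := hBw C
    refine ⟨K * C, by positivity, fun x => ?_⟩
    have hprod : ∏ i, w (Fin.init x i) ≤ 1 :=
      Finset.prod_le_one (fun i _ => hw0 _) (fun i _ => hw1 _)
    have hinit := hbound (Fin.init x)
    calc |iterComp B (m + 1) x|
        ≤ K * w (x (Fin.last (m + 1))) * |iterComp B m (Fin.init x)| :=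
          hBK _ _ (hinit.trans (mul_le_of_le_one_right hC hprod))
      _ ≤ K * w (x (Fin.last (m + 1))) * (C * ∏ i, w (Fin.init x i)) := by
          gcongr; exact mul_nonneg hK (hw0 _)
      _ = K * C * ∏ i, w (x i) := by
          rw [Fin.prod_univ_castSucc (fun i => w (x i))]; simp only [Fin.init]; ring

theorem integrable_iterComp {w : ℝ → ℝ} (hB : Continuous (Function.uncurry B))
    (hw : Integrable w) (hw0 : ∀ x, 0 ≤ w x) (hw1 : ∀ x, w x ≤ 1)
    (hBw : ∀ R, ∃ K, 0 ≤ K ∧ ∀ x h, |h| ≤ R → |B x h| ≤ K * w x * |h|) (m : ℕ) :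
    Integrable (iterComp B m) := by
  obtain ⟨C, -, hbound⟩ := exists_abs_iterComp_le_prod hw0 hw1 hBw m
  refine ((Integrable.fintype_prod (f := fun _ => w) fun _ => hw).const_mul C).mono
    (continuous_iterComp hB m).aestronglyMeasurable (ae_of_all _ fun x => ?_)
  rw [Real.norm_eq_abs, Real.norm_eq_abs]
  exact (hbound x).trans (le_abs_self _)

end IterComp

theorem integrable_comp_abs_of_integrableOn_Ioi {E : Type*} [NormedAddCommGroup E] {f : ℝ → E}
    (hf : IntegrableOn f (Ioi 0)) : Integrable fun x => f |x| := by
  have hIoi : IntegrableOn (fun x => f |x|) (Ioi 0) :=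
    hf.congr_fun (fun x hx => by rw [abs_of_pos hx]) measurableSet_Ioi
  have hIic : IntegrableOn (fun x => f |x|) (Iic 0) := by
    have hneg : MeasurableEmbedding fun x : ℝ => -x := (Homeomorph.neg ℝ).measurableEmbedding
    rw [← Measure.map_neg_eq_self (volume : Measure ℝ), hneg.integrableOn_map_iff]
    simp_rw [Function.comp_def, abs_neg, neg_preimage, neg_Iic, neg_zero]
    exact (integrableOn_Ici_iff_integrableOn_Ioi (f := fun x => f |x|)).2 hIoi
  rw [← integrableOn_univ, ← Iic_union_Ioi (a := (0 : ℝ))]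
  exact hIic.union hIoi

theorem integrable_exp_neg_abs_div_two : Integrable fun x : ℝ => exp (-(|x| / 2)) :=
  integrable_comp_abs_of_integrableOn_Ioi (f := fun t => exp (-(t / 2))) <|
    (exp_neg_integrableOn_Ioi 0 (by norm_num : (0 : ℝ) < 1 / 2)).congr_fun
      (fun x _ => by ring_nf) measurableSet_Ioi

theorem exp_neg_abs_div_two_le_one (x : ℝ) : exp (-(|x| / 2)) ≤ 1 :=
  exp_le_one_iff.2 (by linarith [abs_nonneg x])

noncomputable def mish (x : ℝ) : ℝ := x * tanh (log (1 + exp x))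

namespace Mish

noncomputable def denom (x : ℝ) : ℝ := exp x ^ 2 + 2 * exp x + 2
noncomputable def denom' (x : ℝ) : ℝ := 2 * exp x ^ 2 + 2 * exp x
noncomputable def denom'' (x : ℝ) : ℝ := 4 * exp x ^ 2 + 2 * exp x

/-- `tanh (log (1 + eˣ)) = 1 - 2 / denom x`, so `mish x = x - g x` (`mish_eq`); `denom'` and
`denom''` are the derivatives of `denom`. -/
noncomputable def g (x : ℝ) : ℝ := 2 * x / denom x
noncomputable def g' (x : ℝ) : ℝ := 2 / denom x - 2 * x * denom' x / denom x ^ 2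
noncomputable def g'' (x : ℝ) : ℝ :=
  -4 * (denom' x / denom x ^ 2) - 2 * x * (denom'' x / denom x ^ 2) +
    4 * x * (denom' x ^ 2 / denom x ^ 3)

lemma denom_pos (x : ℝ) : 0 < denom x := by unfold denom; positivity

lemma hasDerivAt_denom (x : ℝ) : HasDerivAt denom (denom' x) x := by
  have h := (((hasDerivAt_exp x).pow 2).add ((hasDerivAt_exp x).const_mul 2)).add_const 2
  exact h.congr_deriv (by simp only [denom']; ring)

lemma hasDerivAt_denom' (x : ℝ) : HasDerivAt denom' (denom'' x) x := by
  have h := (((hasDerivAt_exp x).pow 2).const_mul 2).add ((hasDerivAt_exp x).const_mul 2)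
  exact h.congr_deriv (by simp only [denom'']; ring)

lemma hasDerivAt_g (x : ℝ) : HasDerivAt g (g' x) x := by
  have h := ((hasDerivAt_id x).const_mul 2).div (hasDerivAt_denom x) (denom_pos x).ne'
  refine h.congr_deriv ?_
  have := (denom_pos x).ne'
  simp only [g', id]; field_simp

lemma hasDerivAt_g' (x : ℝ) : HasDerivAt g' (g'' x) x := by
  have h0 := (denom_pos x).ne'
  have h1 := (hasDerivAt_const x (2 : ℝ)).div (hasDerivAt_denom x) h0
  have h2 := (((hasDerivAt_id x).const_mul 2).mul (hasDerivAt_denom' x)).div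
    ((hasDerivAt_denom x).pow 2) (pow_ne_zero 2 h0)
  refine (h1.sub h2).congr_deriv ?_
  simp only [g'', id, Pi.pow_apply, Pi.mul_apply]; field_simp; ring

lemma continuous_denom : Continuous denom := by unfold denom; fun_prop

lemma continuous_g'' : Continuous g'' := by
  have h2 : ∀ x, denom x ^ 2 ≠ 0 := fun x => pow_ne_zero 2 (denom_pos x).ne'
  have h3 : ∀ x, denom x ^ 3 ≠ 0 := fun x => pow_ne_zero 3 (denom_pos x).ne'
  have := continuous_denom
  unfold g'' denom' denom''
  fun_prop (disch := assumption)

theorem mish_eq (x : ℝ) : mish x = x - g x := by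
  have h1 : exp (log (1 + exp x)) = 1 + exp x := exp_log (by positivity)
  have := denom_pos x
  unfold g denom at *
  rw [mish, tanh_eq_sinh_div_cosh, sinh_eq, cosh_eq, exp_neg, h1]
  field_simp
  ring

lemma exp_div_one_add_exp_sq_le (x : ℝ) : exp x / (1 + exp x) ^ 2 ≤ exp (-|x|) := by
  have hu := exp_pos x
  rw [div_le_iff₀ (by positivity)]
  rcases le_total 0 x with hx | hx
  · rw [abs_of_nonneg hx, exp_neg]
    field_simp
    nlinarith
  · rw [abs_of_nonpos hx, neg_neg]
    nlinarith [pow_pos hu 3, mul_pos hu hu]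

lemma abs_g''_le (x : ℝ) : |g'' x| ≤ 24 * (1 + |x|) * exp (-|x|) := by
  set u := exp x with hu_def
  have hu : 0 < u := exp_pos x
  have hD : (1 + u) ^ 2 ≤ denom x := by rw [denom]; nlinarith
  have hD' : denom' x = 2 * u * (1 + u) := by rw [denom']; ring
  have hD'' : 0 ≤ denom'' x := by rw [denom'']; positivity
  have hD''le : denom'' x ≤ 4 * u * (1 + u) := by rw [denom'']; nlinarith
  set p := u / (1 + u) ^ 2 with hp_def
  have hp0 : 0 ≤ p := by positivity
  have hp1 : p ≤ 1 := div_le_one_of_le₀ (by nlinarith) (by positivity)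
  have h1 : denom' x / denom x ^ 2 ≤ 2 * p :=
    calc denom' x / denom x ^ 2 ≤ denom' x / ((1 + u) ^ 2) ^ 2 := by rw [hD']; gcongr
      _ = 2 * p / (1 + u) := by rw [hD', hp_def]; field_simp
      _ ≤ 2 * p := div_le_self (by positivity) (by linarith)
  have h2 : denom'' x / denom x ^ 2 ≤ 4 * p :=
    calc denom'' x / denom x ^ 2 ≤ 4 * u * (1 + u) / ((1 + u) ^ 2) ^ 2 := by gcongr
      _ = 4 * p / (1 + u) := by rw [hp_def]; field_simp
      _ ≤ 4 * p := div_le_self (by positivity) (by linarith)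
  have h3 : denom' x ^ 2 / denom x ^ 3 ≤ 4 * p :=
    calc denom' x ^ 2 / denom x ^ 3 ≤ denom' x ^ 2 / ((1 + u) ^ 2) ^ 3 := by gcongr
      _ = 4 * p * p := by rw [hD', hp_def]; field_simp; ring
      _ ≤ 4 * p := mul_le_of_le_one_right (by positivity) hp1
  have hpexp : p ≤ exp (-|x|) := exp_div_one_add_exp_sq_le x
  calc |g'' x| ≤ 4 * (denom' x / denom x ^ 2) + 2 * |x| * (denom'' x / denom x ^ 2) +
        4 * |x| * (denom' x ^ 2 / denom x ^ 3) := by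
        have ha : 0 ≤ denom' x / denom x ^ 2 := by rw [hD']; positivity
        have hb : 0 ≤ denom'' x / denom x ^ 2 := by positivity
        have hc : 0 ≤ denom' x ^ 2 / denom x ^ 3 := by have := denom_pos x; positivity
        rw [g'', sub_eq_add_neg]
        refine (abs_add_three _ _ _).trans (le_of_eq ?_)
        norm_num [abs_mul, abs_of_nonneg ha, abs_of_nonneg hb, abs_of_nonneg hc]
    _ ≤ 4 * (2 * p) + 2 * |x| * (4 * p) + 4 * |x| * (4 * p) := by gcongr
    _ ≤ 24 * (1 + |x|) * p := by nlinarith [abs_nonneg x]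
    _ ≤ 24 * (1 + |x|) * exp (-|x|) := by gcongr

lemma abs_g''_le_exp (x : ℝ) : |g'' x| ≤ 48 * exp (-(|x| / 2)) := by
  have hlin : 1 + |x| ≤ 2 * exp (|x| / 2) := by linarith [add_one_le_exp (|x| / 2), abs_nonneg x]
  calc |g'' x| ≤ 24 * (1 + |x|) * exp (-|x|) := abs_g''_le x
    _ ≤ 24 * (2 * exp (|x| / 2)) * exp (-|x|) := by gcongr
    _ = 48 * exp (|x| / 2 + -|x|) := by rw [exp_add]; ring
    _ = 48 * exp (-(|x| / 2)) := by ring_nf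

lemma abs_g''_le_of_abs_sub_le {x y h : ℝ} (hy : |y - x| ≤ |h|) :
    |g'' y| ≤ 48 * exp (|h| / 2) * exp (-(|x| / 2)) :=
  calc |g'' y| ≤ 48 * exp (-(|y| / 2)) := abs_g''_le_exp y
    _ ≤ 48 * exp ((|h| - |x|) / 2) := by
        gcongr
        linarith [abs_sub_abs_le_abs_sub x y, abs_sub_comm x y]
    _ = 48 * exp (|h| / 2) * exp (-(|x| / 2)) := by rw [mul_assoc, ← exp_add]; ring_nf

lemma hasDerivAt_mish (x : ℝ) : HasDerivAt mish (1 - g' x) x := by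
  rw [show mish = fun y => y - g y from funext mish_eq]
  exact (hasDerivAt_id x).sub (hasDerivAt_g x)

lemma hasDerivAt_one_sub_g' (x : ℝ) : HasDerivAt (fun y => 1 - g' y) (-g'' x) x :=
  ((hasDerivAt_const x 1).sub (hasDerivAt_g' x)).congr_deriv (zero_sub _)

lemma deriv_deriv_mish : deriv (deriv mish) = fun x => -g'' x := by
  rw [show deriv mish = fun y => 1 - g' y from funext fun y => (hasDerivAt_mish y).deriv]
  exact funext fun x => (hasDerivAt_one_sub_g' x).deriv

end Mish

open Mish

theorem abs_secondDiff_mish_le_exp (x h : ℝ) :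
    |secondDiff mish x h| ≤ 48 * exp (|h| / 2) * exp (-(|x| / 2)) * h ^ 2 :=
  abs_secondDiff_le hasDerivAt_mish hasDerivAt_one_sub_g' continuous_g''.neg
    fun _ hy => (abs_neg _).trans_le (abs_g''_le_of_abs_sub_le hy)

theorem abs_secondDiff_mish_le (x h : ℝ) : |secondDiff mish x h| ≤ 48 * h ^ 2 :=
  abs_secondDiff_le hasDerivAt_mish hasDerivAt_one_sub_g' continuous_g''.neg
    fun y _ => by
      rw [abs_neg]
      exact (abs_g''_le_exp y).trans
        (mul_le_of_le_one_right (by norm_num) (exp_neg_abs_div_two_le_one y))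

theorem integral_abs_secondDiff_mish_le (h : ℝ) :
    ∫ x, |secondDiff mish x h| ≤ (∫ x, |deriv (deriv mish) x|) * h ^ 2 := by
  have hint : Integrable fun x => -g'' x :=
    ((integrable_exp_neg_abs_div_two.const_mul 48).mono continuous_g''.aestronglyMeasurable
      (ae_of_all _ fun x => (abs_g''_le_exp x).trans (le_abs_self _))).neg
  rw [deriv_deriv_mish]
  exact integral_abs_secondDiff_le hasDerivAt_mish hasDerivAt_one_sub_g' continuous_g''.neg hint h

theorem continuous_secondDiff_mish : Continuous (Function.uncurry (secondDiff mish)) := by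
  have : Continuous mish := continuous_iff_continuousAt.2 fun x => (hasDerivAt_mish x).continuousAt
  unfold secondDiff Function.uncurry
  fun_prop

theorem exists_abs_secondDiff_mish_le_mul_abs (R : ℝ) : ∃ K, 0 ≤ K ∧ ∀ x h, |h| ≤ R →
    |secondDiff mish x h| ≤ K * exp (-(|x| / 2)) * |h| := by
  refine ⟨48 * exp (|R| / 2) * |R|, by positivity, fun x h hR => ?_⟩
  have hR' : |h| ≤ |R| := hR.trans (le_abs_self R)
  calc |secondDiff mish x h| ≤ 48 * exp (|h| / 2) * exp (-(|x| / 2)) * (|h| * |h|) := by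
        rw [abs_mul_abs_self, ← sq]; exact abs_secondDiff_mish_le_exp x h
    _ ≤ 48 * exp (|R| / 2) * exp (-(|x| / 2)) * (|R| * |h|) := by gcongr
    _ = 48 * exp (|R| / 2) * |R| * exp (-(|x| / 2)) * |h| := by ring

/-- Properties of the second central difference `B(x,h)` of the Mish activation:
a uniform bound `M h²`, an `L¹` bound `‖σ''‖_{L¹} h²`, and integrability on `ℝⁿ` of the
`n`-fold composition. -/
theorem stmt_17 (n : ℕ) (hn : 1 ≤ n) (σ : ℝ → ℝ)
    (hσ : ∀ x : ℝ, σ x = x * Real.tanh (Real.log (1 + Real.exp x)))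
    (B : ℝ → ℝ → ℝ)
    (hB : ∀ x h : ℝ, B x h = σ (x + h) - 2 * σ x + σ (x - h))
    (𝓑 : (m : ℕ) → (Fin m → ℝ) → ℝ)
    (h1 : ∀ x : Fin 1 → ℝ, 𝓑 1 x = B (x 0) 1)
    (hstep : ∀ (m : ℕ) (x : Fin (m + 2) → ℝ),
      𝓑 (m + 2) x = B (x (Fin.last (m + 1))) (𝓑 (m + 1) (Fin.init x))) :
    (∃ M : ℝ, 0 < M ∧ ∀ x h : ℝ, |B x h| ≤ M * h ^ 2) ∧
    (∀ h : ℝ, (∫ x : ℝ, |B x h|) ≤ (∫ x : ℝ, |deriv (deriv σ) x|) * h ^ 2) ∧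
    Integrable (𝓑 n) := by
  obtain rfl : σ = mish := funext hσ
  obtain rfl : B = secondDiff mish := funext₂ hB
  obtain ⟨m, rfl⟩ := Nat.exists_eq_add_of_le' hn
  refine ⟨⟨48, by norm_num, abs_secondDiff_mish_le⟩, integral_abs_secondDiff_mish_le, ?_⟩
  rw [eq_iterComp h1 hstep]
  exact integrable_iterComp continuous_secondDiff_mish integrable_exp_neg_abs_div_two
    (fun _ => (exp_pos _).le) exp_neg_abs_div_two_le_one
    exists_abs_secondDiff_mish_le_mul_abs m
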